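/- arXiv:2107.04683 — 2 statements merged into one kernel-verified Lean document; each statement's English description precedes it below -/
import Mathlib

section
/- Let A = ⟨Σ,Q,q_I,δ,F⟩ be a trim permutation DFA, let U₁ be a nonempty subset of Q, and let C_{U₁} = {U₁,U₂,…,U_m} be the orbit of U₁, of cardinality m. Then (i) every element of the orbit has the same cardinality |U₁|; (ii) for every state q ∈ Q, the number λ(q) of elements of the orbit containing q equals λ(q_I); and (iii) m·|U₁| = λ(q_I)·|Q|. In particular, if |Q| is prime and U₁ is a nonempty proper subset of Q, then |Q| divides m, so m ≥ |Q|. -/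
open Set

/-- A DFA bundled with a finite state type. -/
structure FinDFA (α : Type) : Type 1 where
  σ : Type
  [fin : Finite σ]
  M : DFA α σ

attribute [instance] FinDFA.fin

/-- The number of states of a bundled DFA. -/
noncomputable def FinDFA.card {α : Type} (B : FinDFA α) : ℕ := Nat.card B.σ

/-- The language of a bundled DFA. -/
def FinDFA.accepts {α : Type} (B : FinDFA α) : Language α := B.M.accepts

/-- `l` is a decomposition of `A`: every member has fewer states than `A`,
and the language of `A` is the intersection of the languages of the members. -/
def IsDecomposition {α Q : Type} (A : DFA α Q) (l : List (FinDFA α)) : Prop :=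
  (∀ B ∈ l, B.card < Nat.card Q) ∧
    ∀ w : List α, w ∈ A.accepts ↔ ∀ B ∈ l, w ∈ B.accepts

/-- `A` is composite if it has a decomposition. -/
def CompositeDFA {α Q : Type} (A : DFA α Q) : Prop :=
  ∃ l : List (FinDFA α), IsDecomposition A l

/-- `A` is `k`-factor composite if it has a decomposition with at most `k` factors. -/
def IsKFactorComposite {α Q : Type} (A : DFA α Q) (k : ℕ) : Prop :=
  ∃ l : List (FinDFA α), l.length ≤ k ∧ IsDecomposition A l

/-- The width of `A`: the least number of factors in a decomposition of `A`. -/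
noncomputable def DFAwidth {α Q : Type} (A : DFA α Q) : ℕ :=
  sInf {k : ℕ | ∃ l : List (FinDFA α), l.length = k ∧ IsDecomposition A l}

/-- `B` is a factor of `A` if it is a member of some decomposition of `A`. -/
def IsFactor {α Q : Type} (A : DFA α Q) (B : FinDFA α) : Prop :=
  ∃ l : List (FinDFA α), B ∈ l ∧ IsDecomposition A l

/-- `A` is trim: every state is reachable from the initial state. -/
def Trim {α Q : Type} (A : DFA α Q) : Prop :=
  ∀ q : Q, ∃ w : List α, A.eval w = q

/-- `A` is a permutation DFA: every letter acts bijectively on the states. -/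
def IsPermutationDFA {α Q : Type} (A : DFA α Q) : Prop :=
  ∀ a : α, Function.Bijective fun q => A.step q a

/-- `A` is commutative. -/
def CommutativeDFA {α Q : Type} (A : DFA α Q) : Prop :=
  ∀ (q : Q) (u v : List α), A.evalFrom q (u ++ v) = A.evalFrom q (v ++ u)

/-- The image of a set of states under the action of a word. -/
def wordImage {α Q : Type} (A : DFA α Q) (U : Set Q) (w : List α) : Set Q :=
  (fun q => A.evalFrom q w) '' U

/-- The orbit of a set of states: all images of it under words. -/
def orbitOf {α Q : Type} (A : DFA α Q) (U : Set Q) : Set (Set Q) :=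
  {V | ∃ w : List α, V = wordImage A U w}

/-- The orbit-DFA `A^U`. Its states are the members of the orbit of `U`, its initial
state is `U`, and its accepting states are the members of the orbit that meet the
accepting states of `A`. -/
def orbitDFA {α Q : Type} (A : DFA α Q) (U : Set Q) : DFA α (orbitOf A U) where
  step V a := ⟨(fun q => A.step q a) '' V.1, by
    obtain ⟨w, hw⟩ := V.2
    exact ⟨w ++ [a], by
      simp [wordImage, hw, Set.image_image, DFA.evalFrom_append_singleton]⟩⟩
  start := ⟨U, ⟨[], by simp [wordImage]⟩⟩
  accept := {V | (V.1 ∩ A.accept).Nonempty}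

/-- The orbit-DFA `A^U` covers a rejecting state `q` of `A` if it is smaller than `A`
and one of its states contains `q` and no accepting state of `A`. -/
def OrbitCovers {α Q : Type} (A : DFA α Q) (U : Set Q) (q : Q) : Prop :=
  Nat.card (orbitOf A U) < Nat.card Q ∧ ∃ V ∈ orbitOf A U, q ∈ V ∧ V ∩ A.accept = ∅

/-- The `k`-th power of a word. -/
def wpow {α : Type} (u : List α) : ℕ → List α
  | 0 => []
  | k + 1 => u ++ wpow u k

/-- The word `u` covers the rejecting state `q`: `u` moves `q`, and all states reached
from `q` by iterating `u` are rejecting. -/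
def WordCovers {α Q : Type} (A : DFA α Q) (u : List α) (q : Q) : Prop :=
  A.evalFrom q u ≠ q ∧ ∀ k : ℕ, A.evalFrom q (wpow u k) ∉ A.accept

/-- `A` is decomposable into its orbit-DFAs. -/
def OrbitDecomposable {α Q : Type} (A : DFA α Q) : Prop :=
  ∃ Us : List (Set Q),
    (∀ U ∈ Us, A.start ∈ U ∧ Nat.card (orbitOf A U) < Nat.card Q) ∧
    ∀ w : List α, w ∈ A.accepts ↔ ∀ U ∈ Us, w ∈ (orbitDFA A U).accepts

lemma evalFrom_bij {α Q : Type} (A : DFA α Q)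
    (hperm : ∀ a : α, Function.Bijective fun q => A.step q a) :
    ∀ w : List α, Function.Bijective fun q => A.evalFrom q w := by
  intro w
  induction w with
  | nil => exact Function.bijective_id
  | cons a w ih =>
      have : (fun q => A.evalFrom q (a :: w)) =
          (fun q => A.evalFrom q w) ∘ (fun q => A.step q a) := rfl
      rw [this]
      exact ih.comp (hperm a)

lemma wordImage_append {α Q : Type} (A : DFA α Q) (U : Set Q) (u v : List α) :
    wordImage A U (u ++ v) = (fun q => A.evalFrom q v) '' wordImage A U u := by
  simp [wordImage, Set.image_image, DFA.evalFrom_of_append]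

lemma wordImage_nil {α Q : Type} (A : DFA α Q) (U : Set Q) :
    wordImage A U [] = U := by
  simp [wordImage]
/-- counting properties of orbits of a trim permutation DFA. -/
theorem orbit_counting {α Q : Type} [Finite Q] (A : DFA α Q)
    (htrim : Trim A) (hperm : IsPermutationDFA A)
    (U₁ : Set Q) (hne : U₁.Nonempty) :
    (∀ V ∈ orbitOf A U₁, Nat.card V = Nat.card U₁) ∧
    (∀ q : Q, Nat.card {V : Set Q | V ∈ orbitOf A U₁ ∧ q ∈ V} =
      Nat.card {V : Set Q | V ∈ orbitOf A U₁ ∧ A.start ∈ V}) ∧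
    (Nat.card (orbitOf A U₁) * Nat.card U₁ =
      Nat.card {V : Set Q | V ∈ orbitOf A U₁ ∧ A.start ∈ V} * Nat.card Q) ∧
    ((Nat.card Q).Prime → U₁ ≠ Set.univ →
      Nat.card Q ∣ Nat.card (orbitOf A U₁) ∧ Nat.card Q ≤ Nat.card (orbitOf A U₁)) := by
  classical
  have hU₁orb : U₁ ∈ orbitOf A U₁ := ⟨[], (wordImage_nil A U₁).symm⟩
  -- part (i)
  have hcard : ∀ V ∈ orbitOf A U₁, Nat.card V = Nat.card U₁ := by
    rintro V ⟨w, rfl⟩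
    have hinj := (evalFrom_bij A hperm w).injective
    simp only [Nat.card_coe_set_eq, wordImage]
    exact Set.ncard_image_of_injective U₁ hinj
  -- part (ii)
  have hlam : ∀ q : Q, Nat.card {V : Set Q | V ∈ orbitOf A U₁ ∧ q ∈ V} =
      Nat.card {V : Set Q | V ∈ orbitOf A U₁ ∧ A.start ∈ V} := by
    intro q
    obtain ⟨w, hw⟩ := htrim q
    set f : Q → Q := fun p => A.evalFrom p w with hf
    have hfb : Function.Bijective f := evalFrom_bij A hperm w
    have hfs : f A.start = q := hw
    have hg : ∀ V ∈ orbitOf A U₁, f '' V ∈ orbitOf A U₁ := by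
      rintro V ⟨u, rfl⟩
      exact ⟨u ++ w, (wordImage_append A U₁ u w).symm⟩
    have hginj : Function.Injective
        (fun V : orbitOf A U₁ => (⟨f '' V.1, hg V.1 V.2⟩ : orbitOf A U₁)) := by
      intro V W h
      have := congrArg Subtype.val h
      exact Subtype.ext ((Set.image_injective.mpr hfb.injective) this)
    have hgbij := Finite.injective_iff_bijective.mp hginj
    refine Nat.card_congr (Equiv.symm (Equiv.ofBijective
      (fun V : {V : Set Q | V ∈ orbitOf A U₁ ∧ A.start ∈ V} =>
        (⟨f '' V.1, hg V.1 V.2.1, ⟨A.start, V.2.2, hfs⟩⟩ :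
          {V : Set Q | V ∈ orbitOf A U₁ ∧ q ∈ V})) ?_))
    constructor
    · intro V W h
      have := congrArg Subtype.val h
      exact Subtype.ext ((Set.image_injective.mpr hfb.injective) this)
    · rintro ⟨W, hWorb, hqW⟩
      obtain ⟨⟨V, hVorb⟩, hVW⟩ := hgbij.surjective ⟨W, hWorb⟩
      have hW : f '' V = W := congrArg Subtype.val hVW
      obtain ⟨p, hp, hpq⟩ : q ∈ f '' V := hW ▸ hqW
      have hps : p = A.start := hfb.injective (hpq.trans hfs.symm)
      exact ⟨⟨V, hVorb, hps ▸ hp⟩, Subtype.ext hW⟩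
  refine ⟨hcard, hlam, ?_⟩
  haveI : Fintype Q := Fintype.ofFinite Q
  -- part (iii)
  have key : Nat.card (orbitOf A U₁) * Nat.card U₁ =
      Nat.card {V : Set Q | V ∈ orbitOf A U₁ ∧ A.start ∈ V} * Nat.card Q := by
    have e : ((V : orbitOf A U₁) × V.1) ≃
        ((p : Q) × {V : Set Q | V ∈ orbitOf A U₁ ∧ p ∈ V}) :=
      { toFun := fun x => ⟨x.2.1, ⟨x.1.1, x.1.2, x.2.2⟩⟩
        invFun := fun x => ⟨⟨x.2.1, x.2.2.1⟩, ⟨x.1, x.2.2.2⟩⟩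
        left_inv := fun x => rfl
        right_inv := fun x => rfl }
    have h1 : Nat.card ((V : orbitOf A U₁) × V.1) =
        Nat.card (orbitOf A U₁) * Nat.card U₁ := by
      haveI : Fintype (orbitOf A U₁) := Fintype.ofFinite _
      have hsum : ∀ V : orbitOf A U₁, Fintype.card V.1 = Nat.card U₁ := by
        intro V; rw [← Nat.card_eq_fintype_card]; exact hcard V.1 V.2
      rw [Nat.card_eq_fintype_card, Fintype.card_sigma]
      simp only [hsum, Finset.sum_const, Finset.card_univ, smul_eq_mul,
        Nat.card_eq_fintype_card]
    have h2 : Nat.card ((p : Q) × {V : Set Q | V ∈ orbitOf A U₁ ∧ p ∈ V}) =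
        Nat.card {V : Set Q | V ∈ orbitOf A U₁ ∧ A.start ∈ V} * Nat.card Q := by
      have hsum : ∀ p : Q, Fintype.card {V : Set Q | V ∈ orbitOf A U₁ ∧ p ∈ V} =
          Nat.card {V : Set Q | V ∈ orbitOf A U₁ ∧ A.start ∈ V} := by
        intro p; rw [← Nat.card_eq_fintype_card]; exact hlam p
      rw [Nat.card_eq_fintype_card, Fintype.card_sigma]
      simp only [hsum]
      simp only [Finset.sum_const, Finset.card_univ, smul_eq_mul,
        Nat.card_eq_fintype_card]
      ring
    rw [← h1, ← h2]
    exact Nat.card_congr e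
  refine ⟨key, ?_⟩
  -- part (iv)
  intro hp hU
  have hU1pos : 0 < Nat.card U₁ := by
    haveI : Nonempty U₁ := hne.to_subtype
    exact Nat.card_pos
  have hU1lt : Nat.card U₁ < Nat.card Q := by
    rw [Nat.card_coe_set_eq]
    have := Set.ncard_lt_ncard (ssubset_univ_iff.mpr hU) (Set.toFinite _)
    simpa [Set.ncard_univ] using this
  have hlampos : 0 < Nat.card {V : Set Q | V ∈ orbitOf A U₁ ∧ A.start ∈ V} := by
    obtain ⟨p, hpU⟩ := hne
    rw [← hlam p]
    haveI : Nonempty {V : Set Q | V ∈ orbitOf A U₁ ∧ p ∈ V} := ⟨⟨U₁, hU₁orb, hpU⟩⟩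
    exact Nat.card_pos
  have hdvd : Nat.card Q ∣ Nat.card (orbitOf A U₁) * Nat.card U₁ := by
    rw [key]; exact Dvd.intro_left _ rfl
  have hnd : ¬ Nat.card Q ∣ Nat.card U₁ :=
    Nat.not_dvd_of_pos_of_lt hU1pos hU1lt
  have hdm : Nat.card Q ∣ Nat.card (orbitOf A U₁) :=
    (hp.dvd_mul.mp hdvd).resolve_right hnd
  have hmpos : 0 < Nat.card (orbitOf A U₁) := by
    haveI : Nonempty (orbitOf A U₁) := ⟨⟨U₁, hU₁orb⟩⟩
    exact Nat.card_pos
  exact ⟨hdm, Nat.le_of_dvd hmpos hdm⟩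
end

section
/- If a trim commutative permutation DFA A is composite, then the width of A is at most the number of rejecting states of A. -/
open Set

/-! ### Auxiliary lemmas -/

section Aux

variable {α Q : Type}

lemma wpow_succ (u : List α) (k : ℕ) : wpow u (k + 1) = u ++ wpow u k := rfl

lemma eval_append_eq {σ : Type} (B : DFA α σ) (x y : List α) :
    B.eval (x ++ y) = B.evalFrom (B.eval x) y :=
  B.evalFrom_of_append B.start x y

lemma evalFrom_bijective (A : DFA α Q) (hperm : IsPermutationDFA A) (w : List α) :
    Function.Bijective (fun p => A.evalFrom p w) := by
  induction w with
  | nil =>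
    simp only [DFA.evalFrom_nil]
    exact Function.bijective_id
  | cons a w ih =>
    have h : (fun p => A.evalFrom p (a :: w))
        = (fun p => A.evalFrom p w) ∘ (fun p => A.step p a) := rfl
    rw [h]
    exact ih.comp (hperm a)

lemma exists_iterate_id [Finite Q] {f : Q → Q} (hf : Function.Injective f) :
    ∃ n, 0 < n ∧ ∀ p, f^[n] p = p := by
  obtain ⟨i, j, hne, hij⟩ := Finite.exists_ne_map_eq_of_infinite (fun n : ℕ => f^[n])
  have key : ∀ i j : ℕ, i < j → f^[i] = f^[j] → ∃ n, 0 < n ∧ ∀ p, f^[n] p = p := by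
    intro i j hlt hij
    refine ⟨j - i, by omega, fun p => ?_⟩
    have h1 : f^[i] (f^[j - i] p) = f^[i] p := by
      rw [← Function.iterate_add_apply]
      rw [show i + (j - i) = j by omega, ← hij]
    exact hf.iterate i h1
  rcases hne.lt_or_gt with h | h
  · exact key i j h hij
  · exact key j i h hij.symm

lemma evalFrom_wpow (A : DFA α Q) (u : List α) (k : ℕ) (p : Q) :
    A.evalFrom p (wpow u k) = (fun p => A.evalFrom p u)^[k] p := by
  induction k generalizing p with
  | zero => rfl
  | succ k ih =>
    rw [wpow_succ, DFA.evalFrom_of_append, ih, Function.iterate_succ_apply]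

lemma exists_inverse_word [Finite Q] (A : DFA α Q) (hperm : IsPermutationDFA A) (u : List α) :
    ∃ u', ∀ p, A.evalFrom p (u ++ u') = p := by
  obtain ⟨n, hn, h⟩ := exists_iterate_id (evalFrom_bijective A hperm u).injective
  obtain ⟨m, rfl⟩ : ∃ m, n = m + 1 := ⟨n - 1, by omega⟩
  refine ⟨wpow u m, fun p => ?_⟩
  rw [show u ++ wpow u m = wpow u (m + 1) from rfl, evalFrom_wpow]
  exact h p

lemma exists_word_evalFrom [Finite Q] (A : DFA α Q) (htrim : Trim A)
    (hperm : IsPermutationDFA A) (p p' : Q) : ∃ w, A.evalFrom p w = p' := by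
  obtain ⟨w1, hw1⟩ := htrim p
  obtain ⟨w2, hw2⟩ := htrim p'
  obtain ⟨w1', hw1'⟩ := exists_inverse_word A hperm w1
  refine ⟨w1' ++ w2, ?_⟩
  have h0 : A.evalFrom p w1' = A.start := by
    have h := hw1' A.start
    rw [DFA.evalFrom_of_append] at h
    rwa [show A.evalFrom A.start w1 = p from hw1] at h
  rw [DFA.evalFrom_of_append, h0]
  exact hw2

lemma fixed_all [Finite Q] (A : DFA α Q) (htrim : Trim A) (hperm : IsPermutationDFA A)
    (hcomm : CommutativeDFA A) {u : List α} {p : Q} (h : A.evalFrom p u = p) (p' : Q) :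
    A.evalFrom p' u = p' := by
  obtain ⟨w, hw⟩ := exists_word_evalFrom A htrim hperm p p'
  calc A.evalFrom p' u = A.evalFrom (A.evalFrom p w) u := by rw [hw]
    _ = A.evalFrom p (w ++ u) := (A.evalFrom_of_append p w u).symm
    _ = A.evalFrom p (u ++ w) := hcomm p w u
    _ = A.evalFrom (A.evalFrom p u) w := A.evalFrom_of_append p u w
    _ = A.evalFrom p w := by rw [h]
    _ = p' := hw

lemma evalFrom_congr [Finite Q] (A : DFA α Q) (htrim : Trim A) (hcomm : CommutativeDFA A)
    {u v : List α} (h : A.eval u = A.eval v) (p : Q) : A.evalFrom p u = A.evalFrom p v := by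
  obtain ⟨w, hw⟩ := htrim p
  rw [← hw]
  calc A.evalFrom (A.eval w) u = A.evalFrom A.start (w ++ u) :=
        (A.evalFrom_of_append A.start w u).symm
    _ = A.evalFrom A.start (u ++ w) := hcomm A.start w u
    _ = A.evalFrom (A.eval u) w := A.evalFrom_of_append A.start u w
    _ = A.evalFrom (A.eval v) w := by rw [h]
    _ = A.evalFrom A.start (v ++ w) := (A.evalFrom_of_append A.start v w).symm
    _ = A.evalFrom A.start (w ++ v) := hcomm A.start v w
    _ = A.evalFrom (A.eval w) v := A.evalFrom_of_append A.start w v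

/-- The set of states reachable from `s` in `B`. -/
def reachSet {σ : Type} (B : DFA α σ) (s : σ) : Set σ := {t | ∃ v : List α, B.evalFrom s v = t}

lemma self_mem_reachSet {σ : Type} (B : DFA α σ) (s : σ) : s ∈ reachSet B s := ⟨[], rfl⟩

lemma reachSet_step_subset {σ : Type} (B : DFA α σ) (s : σ) (v : List α) :
    reachSet B (B.evalFrom s v) ⊆ reachSet B s := by
  rintro t ⟨z, hz⟩
  exact ⟨v ++ z, by rw [DFA.evalFrom_of_append, hz]⟩

lemma sum_map_le_imp {β : Type*} (g h : β → ℕ) :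
    ∀ l : List β, (∀ b ∈ l, g b ≤ h b) → (l.map h).sum ≤ (l.map g).sum →
      ∀ b ∈ l, h b ≤ g b := by
  intro l
  induction l with
  | nil =>
    intro _ _ b hb
    simp at hb
  | cons c l ih =>
    intro hle hsum b hb
    simp only [List.map_cons, List.sum_cons] at hsum
    have hsum2 : (l.map g).sum ≤ (l.map h).sum := by
      have : ∀ l' : List β, (∀ b ∈ l', g b ≤ h b) → (l'.map g).sum ≤ (l'.map h).sum := by
        intro l'
        induction l' with
        | nil => intro _; simp
        | cons d l' ihd =>
          intro hle'
          simp only [List.map_cons, List.sum_cons]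
          have h1 := hle' d List.mem_cons_self
          have h2 := ihd (fun x hx => hle' x (List.mem_cons_of_mem _ hx))
          omega
      exact this l (fun x hx => hle x (List.mem_cons_of_mem _ hx))
    have hgc : g c ≤ h c := hle c List.mem_cons_self
    rcases List.mem_cons.mp hb with rfl | hb'
    · omega
    · exact ih (fun x hx => hle x (List.mem_cons_of_mem _ hx)) (by omega) b hb'

set_option maxHeartbeats 1000000 in
/-- There is a word reaching `q` such that, for each DFA in the list `l`, the state reached
on that word is recurrent (any extension can be completed to return to it). -/
lemma exists_recurrent_word [Finite Q] (A : DFA α Q) (htrim : Trim A)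
    (hperm : IsPermutationDFA A) (l : List (FinDFA α)) (q : Q) :
    ∃ w, A.eval w = q ∧
      ∀ B ∈ l, ∀ v : List α, ∃ v', B.M.evalFrom (B.M.eval w) (v ++ v') = B.M.eval w := by
  classical
  set Φ : List α → ℕ := fun w => (l.map (fun B => (reachSet B.M (B.M.eval w)).ncard)).sum
    with hΦdef
  set S : Set ℕ := Φ '' {w | A.eval w = q} with hSdef
  have hS : S.Nonempty := by
    obtain ⟨w, hw⟩ := htrim q
    exact ⟨Φ w, w, hw, rfl⟩
  obtain ⟨w, hwq, hΦw⟩ : ∃ w, A.eval w = q ∧ Φ w = sInf S := by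
    obtain ⟨w, hw, hwn⟩ := Nat.sInf_mem hS
    exact ⟨w, hw, hwn⟩
  refine ⟨w, hwq, ?_⟩
  intro B hB v
  obtain ⟨v₂, hv₂⟩ := exists_inverse_word A hperm v
  set v₀ := v ++ v₂ with hv₀def
  have hq' : A.eval (w ++ v₀) = q := by
    rw [eval_append_eq, hwq]
    exact hv₂ q
  have hmem : Φ (w ++ v₀) ∈ S := ⟨w ++ v₀, hq', rfl⟩
  have hge : Φ w ≤ Φ (w ++ v₀) := hΦw ▸ Nat.sInf_le hmem
  have hptw : ∀ C ∈ l, (reachSet C.M (C.M.eval (w ++ v₀))).ncard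
      ≤ (reachSet C.M (C.M.eval w)).ncard := by
    intro C _
    apply Set.ncard_le_ncard ?_ (Set.toFinite _)
    rw [eval_append_eq]
    exact reachSet_step_subset C.M (C.M.eval w) v₀
  have key := sum_map_le_imp (fun C => (reachSet C.M (C.M.eval (w ++ v₀))).ncard)
      (fun C => (reachSet C.M (C.M.eval w)).ncard) l hptw hge B hB
  have hsub : reachSet B.M (B.M.evalFrom (B.M.eval w) v₀) ⊆ reachSet B.M (B.M.eval w) :=
    reachSet_step_subset B.M (B.M.eval w) v₀
  have hcard : (reachSet B.M (B.M.eval w)).ncard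
      ≤ (reachSet B.M (B.M.evalFrom (B.M.eval w) v₀)).ncard := by
    rw [← eval_append_eq]
    exact key
  have heq : reachSet B.M (B.M.evalFrom (B.M.eval w) v₀) = reachSet B.M (B.M.eval w) :=
    Set.eq_of_subset_of_ncard_le hsub hcard (Set.toFinite _)
  have hmem2 : B.M.eval w ∈ reachSet B.M (B.M.evalFrom (B.M.eval w) v₀) := by
    rw [heq]
    exact self_mem_reachSet B.M (B.M.eval w)
  obtain ⟨z, hz⟩ := hmem2
  refine ⟨v₂ ++ z, ?_⟩
  rw [show v ++ (v₂ ++ z) = (v ++ v₂) ++ z from (List.append_assoc v v₂ z).symm,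
    DFA.evalFrom_of_append]
  exact hz

/-- The covering lemma: in a composite trim commutative permutation DFA, every rejecting
state `q` admits a word `u` that moves `q` and all of whose iterates keep `q` rejecting. -/
lemma exists_cover [Finite Q] (A : DFA α Q) (htrim : Trim A) (hperm : IsPermutationDFA A)
    (hcomm : CommutativeDFA A) {l : List (FinDFA α)} (hl : IsDecomposition A l)
    {q : Q} (hq : q ∉ A.accept) :
    ∃ u, A.evalFrom q u ≠ q ∧ ∀ k, A.evalFrom q (wpow u k) ∉ A.accept := by
  classical
  obtain ⟨w, hwq, hrec⟩ := exists_recurrent_word A htrim hperm l q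
  have hwL : w ∉ A.accepts := by
    rw [DFA.mem_accepts, hwq]
    exact hq
  have hex : ∃ B ∈ l, w ∉ FinDFA.accepts B := by
    by_contra hcon
    push_neg at hcon
    exact hwL ((hl.2 w).mpr hcon)
  obtain ⟨B, hBl, hBw⟩ := hex
  have hsrej : B.M.eval w ∉ B.M.accept := fun h => hBw ((DFA.mem_accepts B.M).mpr h)
  have key : ∃ u, B.M.evalFrom (B.M.eval w) u = B.M.eval w ∧ A.eval u ≠ A.start := by
    by_contra hcon
    push_neg at hcon
    have hθinj : Function.Injective
        (fun p : Q => B.M.evalFrom (B.M.eval w)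
          (exists_word_evalFrom A htrim hperm q p).choose) := by
      intro p p' hpp'
      set up := (exists_word_evalFrom A htrim hperm q p).choose with hupdef
      set up' := (exists_word_evalFrom A htrim hperm q p').choose with hup'def
      have hup : A.evalFrom q up = p := (exists_word_evalFrom A htrim hperm q p).choose_spec
      have hup' : A.evalFrom q up' = p' := (exists_word_evalFrom A htrim hperm q p').choose_spec
      obtain ⟨v', hv'⟩ := hrec B hBl up
      have hBv : B.M.evalFrom (B.M.eval w) (up' ++ v') = B.M.eval w := by
        rw [DFA.evalFrom_of_append] at hv' ⊢
        have : B.M.evalFrom (B.M.eval w) up' = B.M.evalFrom (B.M.eval w) up := hpp'.symm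
        rw [this]
        exact hv'
      have h1 : A.eval (up ++ v') = A.start := hcon _ hv'
      have h2 : A.eval (up' ++ v') = A.start := hcon _ hBv
      have h1' : A.evalFrom p v' = q := by
        have hfix := fixed_all A htrim hperm hcomm
          (show A.evalFrom A.start (up ++ v') = A.start from h1) q
        rw [DFA.evalFrom_of_append, hup] at hfix
        exact hfix
      have h2' : A.evalFrom p' v' = q := by
        have hfix := fixed_all A htrim hperm hcomm
          (show A.evalFrom A.start (up' ++ v') = A.start from h2) q
        rw [DFA.evalFrom_of_append, hup'] at hfix
        exact hfix
      exact (evalFrom_bijective A hperm v').injective (h1'.trans h2'.symm)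
    have hcard := Nat.card_le_card_of_injective _ hθinj
    have hlt : Nat.card B.σ < Nat.card Q := hl.1 B hBl
    omega
  obtain ⟨u, hu1, hu2⟩ := key
  refine ⟨u, ?_, ?_⟩
  · intro h
    exact hu2 (fixed_all A htrim hperm hcomm h A.start)
  · have hloop : ∀ k, B.M.evalFrom (B.M.eval w) (wpow u k) = B.M.eval w := by
      intro k
      induction k with
      | zero => rfl
      | succ k ih =>
        rw [wpow_succ, DFA.evalFrom_of_append, hu1, ih]
    intro k hacc
    have hwk : (w ++ wpow u k) ∈ A.accepts := by
      rw [DFA.mem_accepts, eval_append_eq, hwq]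
      exact hacc
    have hBacc : (w ++ wpow u k) ∈ FinDFA.accepts B := (hl.2 _).mp hwk B hBl
    have : B.M.eval (w ++ wpow u k) ∈ B.M.accept := (DFA.mem_accepts B.M).mp hBacc
    rw [eval_append_eq, hloop k] at this
    exact hsrej this

lemma orbitDFA_evalFrom (A : DFA α Q) (U : Set Q) (w : List α) :
    ∀ V : ↥(orbitOf A U), ((orbitDFA A U).evalFrom V w).1 = (fun p => A.evalFrom p w) '' V.1 := by
  induction w with
  | nil =>
    intro V
    simp [DFA.evalFrom_nil]
  | cons a w ih =>
    intro V
    have h1 : (orbitDFA A U).evalFrom V (a :: w)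
        = (orbitDFA A U).evalFrom ((orbitDFA A U).step V a) w := rfl
    rw [h1, ih]
    show (fun p => A.evalFrom p w) '' ((fun p => A.step p a) '' V.1) = _
    rw [Set.image_image]
    rfl

lemma orbitDFA_mem_accepts (A : DFA α Q) (U : Set Q) (w : List α) :
    w ∈ (orbitDFA A U).accepts ↔ ((fun p => A.evalFrom p w) '' U ∩ A.accept).Nonempty := by
  have h1 : w ∈ (orbitDFA A U).accepts
      ↔ (((orbitDFA A U).evalFrom (orbitDFA A U).start w).1 ∩ A.accept).Nonempty := Iff.rfl
  rw [h1, orbitDFA_evalFrom]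
  exact Iff.rfl

/-- Construction of the orbit factor covering a rejecting state `q`. -/
lemma orbit_factor [Finite Q] (A : DFA α Q) (htrim : Trim A) (hperm : IsPermutationDFA A)
    (hcomm : CommutativeDFA A) {q : Q} {u : List α} (hu1 : A.evalFrom q u ≠ q)
    (hu2 : ∀ k, A.evalFrom q (wpow u k) ∉ A.accept) :
    ∃ U : Set Q, Nat.card ↥(orbitOf A U) < Nat.card Q ∧
      (∀ w, w ∈ A.accepts → w ∈ (orbitDFA A U).accepts) ∧
      (∀ w, A.eval w = q → w ∉ (orbitDFA A U).accepts) := by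
  classical
  set U : Set Q := {p | ∃ k, A.eval (wpow u k) = p} with hUdef
  have hstart : A.start ∈ U := ⟨0, rfl⟩
  have hUimg : (fun p => A.evalFrom p u) '' U = U := by
    apply Set.eq_of_subset_of_ncard_le ?_ ?_ (Set.toFinite U)
    · rintro _ ⟨p, ⟨k, rfl⟩, rfl⟩
      refine ⟨k + 1, ?_⟩
      rw [wpow_succ]
      rw [show A.eval (u ++ wpow u k) = A.evalFrom A.start (u ++ wpow u k) from rfl,
        hcomm A.start u (wpow u k), DFA.evalFrom_of_append]
      rfl
    · rw [Set.ncard_image_of_injective U (evalFrom_bijective A hperm u).injective]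
  have hne : A.eval u ≠ A.start := by
    intro h
    exact hu1 (fixed_all A htrim hperm hcomm
      (show A.evalFrom A.start u = A.start from h) q)
  have himgcongr : ∀ w w' : List α, A.eval w = A.eval w' →
      (fun p => A.evalFrom p w) '' U = (fun p => A.evalFrom p w') '' U := by
    intro w w' h
    have hf : (fun p => A.evalFrom p w) = (fun p => A.evalFrom p w') :=
      funext (evalFrom_congr A htrim hcomm h)
    rw [hf]
  set θ : Q → ↥(orbitOf A U) := fun p =>
    ⟨wordImage A U (htrim p).choose, ⟨(htrim p).choose, rfl⟩⟩ with hθdef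
  have hθval : ∀ w : List α, (θ (A.eval w)).1 = wordImage A U w := by
    intro w
    show wordImage A U (htrim (A.eval w)).choose = wordImage A U w
    exact himgcongr _ _ (htrim (A.eval w)).choose_spec
  have hθsurj : Function.Surjective θ := by
    rintro ⟨V, w, rfl⟩
    exact ⟨A.eval w, Subtype.ext (hθval w)⟩
  have hθeq : θ A.start = θ (A.eval u) := by
    apply Subtype.ext
    have h1 : (θ A.start).1 = wordImage A U [] := hθval []
    rw [h1, hθval u]
    show (fun p => A.evalFrom p []) '' U = (fun p => A.evalFrom p u) '' U
    rw [hUimg]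
    simp [DFA.evalFrom_nil]
  letI : Fintype Q := Fintype.ofFinite Q
  letI : Fintype ↥(orbitOf A U) := Fintype.ofFinite _
  have hcardlt : Nat.card ↥(orbitOf A U) < Nat.card Q := by
    rw [Nat.card_eq_fintype_card, Nat.card_eq_fintype_card]
    rcases lt_or_eq_of_le (Fintype.card_le_of_surjective θ hθsurj) with h | h
    · exact h
    · exfalso
      have hbij : Function.Bijective θ :=
        (Fintype.bijective_iff_surjective_and_card θ).mpr ⟨hθsurj, h.symm⟩
      exact hne (hbij.injective hθeq).symm
  refine ⟨U, hcardlt, ?_, ?_⟩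
  · intro w hw
    rw [orbitDFA_mem_accepts]
    exact ⟨A.eval w, ⟨A.start, hstart, rfl⟩, (DFA.mem_accepts A).mp hw⟩
  · intro w hwq hacc
    rw [orbitDFA_mem_accepts] at hacc
    obtain ⟨x, hx1, hx2⟩ := hacc
    obtain ⟨p, ⟨k, rfl⟩, rfl⟩ := hx1
    apply hu2 k
    have hcalc : A.evalFrom (A.eval (wpow u k)) w = A.evalFrom q (wpow u k) := by
      calc A.evalFrom (A.eval (wpow u k)) w
          = A.evalFrom A.start (wpow u k ++ w) :=
            (A.evalFrom_of_append A.start (wpow u k) w).symm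
        _ = A.evalFrom A.start (w ++ wpow u k) := hcomm A.start (wpow u k) w
        _ = A.evalFrom (A.eval w) (wpow u k) := A.evalFrom_of_append A.start w (wpow u k)
        _ = A.evalFrom q (wpow u k) := by rw [hwq]
    have hx2' : A.evalFrom (A.eval (wpow u k)) w ∈ A.accept := hx2
    rwa [hcalc] at hx2'

end Aux

/-- the width of a composite trim commutative permutation DFA is at most its
number of rejecting states. -/
theorem width_le_card_rejecting {α Q : Type} [Finite Q] (A : DFA α Q)
    (htrim : Trim A) (hperm : IsPermutationDFA A) (hcomm : CommutativeDFA A)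
    (hcomp : CompositeDFA A) :
    DFAwidth A ≤ Nat.card {q : Q // q ∉ A.accept} := by
  classical
  obtain ⟨l, hl⟩ := hcomp
  have cov : ∀ q : {q : Q // q ∉ A.accept},
      ∃ U : Set Q, Nat.card ↥(orbitOf A U) < Nat.card Q ∧
        (∀ w, w ∈ A.accepts → w ∈ (orbitDFA A U).accepts) ∧
        (∀ w, A.eval w = q.1 → w ∉ (orbitDFA A U).accepts) := by
    intro q
    obtain ⟨u, hu1, hu2⟩ := exists_cover A htrim hperm hcomm hl q.2
    exact orbit_factor A htrim hperm hcomm hu1 hu2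
  choose U hU1 hU2 hU3 using cov
  letI : Fintype {q : Q // q ∉ A.accept} := Fintype.ofFinite _
  let mk : {q : Q // q ∉ A.accept} → FinDFA α := fun q =>
    { σ := ↥(orbitOf A (U q)), M := orbitDFA A (U q) }
  let L : List (FinDFA α) := (Finset.univ : Finset {q : Q // q ∉ A.accept}).toList.map mk
  have hdec : IsDecomposition A L := by
    constructor
    · intro B hB
      obtain ⟨q, _, rfl⟩ := List.mem_map.mp hB
      exact hU1 q
    · intro w
      constructor
      · intro hw B hB
        obtain ⟨q, _, rfl⟩ := List.mem_map.mp hB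
        exact hU2 q w hw
      · intro hall
        by_contra hw
        have hrej : A.eval w ∉ A.accept := fun h => hw ((DFA.mem_accepts A).mpr h)
        have hmem : mk ⟨A.eval w, hrej⟩ ∈ L :=
          List.mem_map.mpr ⟨⟨A.eval w, hrej⟩, Finset.mem_toList.mpr (Finset.mem_univ _), rfl⟩
        exact hU3 ⟨A.eval w, hrej⟩ w rfl (hall _ hmem)
  have hlen : L.length = Nat.card {q : Q // q ∉ A.accept} := by
    simp only [L, List.length_map, Finset.length_toList, Finset.card_univ,
      Nat.card_eq_fintype_card]
  unfold DFAwidth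
  exact Nat.sInf_le ⟨L, hlen, hdec⟩
end
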